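/- Let G=(V,E) be an undirected polymatroidal network with a fractional cut solution ℓ, ℓ(e,u), ℓ(e,v). Let g: V → [0,β] be 1-Lipschitz with respect to dist_ℓ, and for θ ∈ (0,β) let S_θ = {u ∈ V : g(u) ≤ θ}. Then ∫_0^β ν(δ(S_θ)) dθ ≤ 2·Σ_{u∈V} ρ̂_u(d_u). -/

import Mathlib

open Finset MeasureTheory
open scoped ENNReal Classical

/-- `UWalk ep1 ep2 s t p`: in the undirected graph whose edge `e` has endpoints
`ep1 e` and `ep2 e`, the list of edges `p` forms a walk from `s` to `t`. -/
def UWalk {V E : Type} [DecidableEq V] (ep1 ep2 : E → V) : V → V → List E → Prop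
  | s, t, [] => s = t
  | s, t, e :: p => (ep1 e = s ∨ ep2 e = s) ∧
      UWalk ep1 ep2 (if ep1 e = s then ep2 e else ep1 e) t p

/-- The list of vertices visited by an undirected walk starting at `s`. -/
def uwalkVerts {V E : Type} [DecidableEq V] (ep1 ep2 : E → V) : V → List E → List V
  | s, [] => [s]
  | s, e :: p => s :: uwalkVerts ep1 ep2 (if ep1 e = s then ep2 e else ep1 e) p

/-- A simple undirected path from `s` to `t`. -/
def UIsPath {V E : Type} [DecidableEq V] (ep1 ep2 : E → V) (s t : V) (p : List E) : Prop :=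
  UWalk ep1 ep2 s t p ∧ (uwalkVerts ep1 ep2 s p).Nodup

/-- `F` separates `s` and `t`: they lie in different connected components of `G∖F`. -/
def USep {V E : Type} [DecidableEq V] (ep1 ep2 : E → V) (F : Finset E) (s t : V) : Prop :=
  ¬ ∃ p : List E, UWalk ep1 ep2 s t p ∧ ∀ e ∈ p, e ∉ F

/-- `δ(S)`: the set of edges with exactly one endpoint in `S`. -/
def uvcut {V E : Type} [Fintype E] [DecidableEq V] (ep1 ep2 : E → V) (S : Finset V) :
    Finset E :=
  Finset.univ.filter (fun e => (ep1 e ∈ S ∧ ep2 e ∉ S) ∨ (ep1 e ∉ S ∧ ep2 e ∈ S))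

/-- Shortest-path distance (in `ℝ≥0∞`, `⊤` when unreachable) under edge lengths `len`. -/
noncomputable def udist {V E : Type} [DecidableEq V] (ep1 ep2 : E → V) (len : E → ℝ)
    (u v : V) : ℝ≥0∞ :=
  ⨅ p : { p : List E // UWalk ep1 ep2 u v p }, ENNReal.ofReal ((p.1.map len).sum)

/-- The Lovász extension of `ρ` on the ground set `ground`,
`ρ̂(x) = ∫_0^∞ ρ({e ∈ ground : x e ≥ θ}) dθ` (which agrees with `∫_0^1` when `x ≤ 1`). -/
noncomputable def lovaszExt {E : Type} [Fintype E] (ρ : Finset E → ℝ)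
    (ground : Finset E) (x : E → ℝ) : ℝ :=
  ∫ θ in Set.Ioi (0:ℝ), ρ (ground.filter (fun e => θ ≤ x e))

/-- An undirected polymatroidal network: a finite undirected graph together with,
for each node `v`, a polymatroid `rho v` on the set of edges incident to `v`. -/
structure UPolyNet (V E : Type) [Fintype V] [Fintype E] [DecidableEq V] [DecidableEq E] where
  ep1 : E → V
  ep2 : E → V
  rho : V → Finset E → ℝ
  rho_empty : ∀ v, rho v ∅ = 0
  rho_nonneg : ∀ v A, A ⊆ Finset.univ.filter (fun e => ep1 e = v ∨ ep2 e = v) → 0 ≤ rho v A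
  rho_mono : ∀ v A B, A ⊆ B → B ⊆ Finset.univ.filter (fun e => ep1 e = v ∨ ep2 e = v) →
    rho v A ≤ rho v B
  rho_submod : ∀ v A B, A ⊆ Finset.univ.filter (fun e => ep1 e = v ∨ ep2 e = v) →
    B ⊆ Finset.univ.filter (fun e => ep1 e = v ∨ ep2 e = v) →
    rho v (A ∪ B) + rho v (A ∩ B) ≤ rho v A + rho v B

namespace UPolyNet

variable {V E : Type} [Fintype V] [Fintype E] [DecidableEq V] [DecidableEq E]

/-- The set `δ(v)` of edges incident to `v` (the ground set of `rho v`). -/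
def incE (N : UPolyNet V E) (v : V) : Finset E :=
  Finset.univ.filter (fun e => N.ep1 e = v ∨ N.ep2 e = v)

/-- The cost `ν(F)` of the edge cut `F`: the minimum over valid assignments `g` of
the edges of `F` to their endpoints of `Σ_v ρ_v(g⁻¹(v))`. -/
noncomputable def cutCost (N : UPolyNet V E) (F : Finset E) : ℝ :=
  sInf { c : ℝ | ∃ g : E → V, (∀ e ∈ F, g e = N.ep1 e ∨ g e = N.ep2 e) ∧
    c = ∑ v : V, N.rho v ((N.incE v ∩ F).filter (fun e => g e = v)) }

/-- Total flow on an edge `e`. -/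
noncomputable def edgeFlow (N : UPolyNet V E) {ι : Type} [Fintype ι]
    (f : ι → List E → ℝ) (e : E) : ℝ :=
  ∑ i : ι, ∑ᶠ p ∈ {p : List E | e ∈ p}, f i p

/-- The rate of commodity `i`. -/
noncomputable def rate {ι : Type} (f : ι → List E → ℝ) (i : ι) : ℝ :=
  ∑ᶠ p : List E, f i p

/-- A feasible multicommodity flow for the source-sink pairs `(s i, t i)`. -/
structure IsFlow (N : UPolyNet V E) {ι : Type} [Fintype ι] (s t : ι → V)
    (f : ι → List E → ℝ) : Prop where
  nonneg : ∀ i p, 0 ≤ f i p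
  supp : ∀ i p, f i p ≠ 0 → UIsPath N.ep1 N.ep2 (s i) (t i) p
  fin : ∀ i, (Function.support (f i)).Finite
  cap : ∀ v, ∀ S ⊆ N.incE v, ∑ e ∈ S, N.edgeFlow f e ≤ N.rho v S

/-- `D(F)`: the total demand of the pairs separated by `F`. -/
noncomputable def sepDemand (N : UPolyNet V E) {ι : Type} [Fintype ι]
    (s t : ι → V) (D : ι → ℝ) (F : Finset E) : ℝ :=
  ∑ i : ι, if USep N.ep1 N.ep2 F (s i) (t i) then D i else 0

/-- The value of the maximum throughput multicommodity flow. -/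
noncomputable def maxThroughput (N : UPolyNet V E) {ι : Type} [Fintype ι]
    (s t : ι → V) : ℝ :=
  sSup { r : ℝ | ∃ f : ι → List E → ℝ, N.IsFlow s t f ∧ r = ∑ i : ι, rate f i }

/-- The value of the maximum concurrent multicommodity flow for demands `D`. -/
noncomputable def maxConcurrent (N : UPolyNet V E) {ι : Type} [Fintype ι]
    (s t : ι → V) (D : ι → ℝ) : ℝ :=
  sSup { lam : ℝ | ∃ f : ι → List E → ℝ, N.IsFlow s t f ∧ ∀ i, rate f i = lam * D i }

/-- The vector `d_v`: for an edge `e` incident to `v`, its portion `ℓ(e,v)`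
assigned to `v` by the fractional cut solution with portions `c1` (at `ep1`)
and `c2` (at `ep2`). -/
def dvec (N : UPolyNet V E) (c1 c2 : E → ℝ) (v : V) : E → ℝ :=
  fun e => if N.ep1 e = v then c1 e else c2 e

/-- `ρ̂_v(d_v)`, the contribution of the node `v` to the fractional cut cost. -/
noncomputable def nodeVol (N : UPolyNet V E) (c1 c2 : E → ℝ) (v : V) : ℝ :=
  lovaszExt (N.rho v) (N.incE v) (N.dvec c1 c2 v)

/-- `vol(X) = Σ_{v ∈ X} ρ̂_v(d_v)`. -/
noncomputable def vol (N : UPolyNet V E) (c1 c2 : E → ℝ) (X : Finset V) : ℝ :=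
  ∑ v ∈ X, N.nodeVol c1 c2 v

end UPolyNet

open UPolyNet

/-! For a threshold `θ`, assign a cut edge `e = uv` to `u` if `|θ - g u| ≤ ℓ(e,u)` and to `v`
otherwise. As `θ` lies between `g u` and `g v` and `|g u - g v| ≤ ℓ(e) = ℓ(e,u) + ℓ(e,v)`, an edge
assigned to `v` then has `|θ - g v| ≤ ℓ(e,v)`, so
`ν(δ(S_θ)) ≤ Σ_v ρ_v({e : |θ - g v| ≤ d_v(e)})`. Integrating in `θ`, each summand is at most
`∫_ℝ ρ_v({e : |θ - g v| ≤ d_v(e)}) dθ = ∫_ℝ ρ_v({e : |t| ≤ d_v(e)}) dt = 2 ρ̂_v(d_v)`. -/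

section FinsetFilter

variable {α : Type}

theorem abs_comp_finset_filter_le (φ : Finset α → ℝ) (s : Finset α) (p : α → Prop)
    [DecidablePred p] : |φ (s.filter p)| ≤ ∑ A ∈ s.powerset, |φ A| :=
  Finset.single_le_sum (fun A _ => abs_nonneg (φ A)) (Finset.mem_powerset.2 (filter_subset _ _))

variable [Fintype α]

theorem measurable_comp_finset_filter {X : Type} [MeasurableSpace X] (φ : Finset α → ℝ)
    (s : Finset α) (p : X → α → Prop) [∀ x, DecidablePred (p x)]
    (hp : ∀ a, MeasurableSet {x | p x a}) :
    Measurable fun x => φ (s.filter (p x)) := by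
  have hdec : Measurable fun x a => decide (p x a) :=
    measurable_pi_lambda _ fun a => measurable_to_bool (by convert hp a using 1; ext; simp)
  convert (measurable_of_countable fun b : α → Bool => φ (s.filter fun a => b a)).comp hdec
    using 1
  funext x
  simp

theorem intervalIntegrable_comp_finset_filter (φ : Finset α → ℝ) (s : Finset α)
    (p : ℝ → α → Prop) [∀ x, DecidablePred (p x)] (hp : ∀ a, MeasurableSet {x | p x a})
    (a b : ℝ) : IntervalIntegrable (fun x => φ (s.filter (p x))) volume a b :=
  (intervalIntegrable_const (c := ∑ A ∈ s.powerset, |φ A|)).mono_fun'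
    (measurable_comp_finset_filter φ s p hp).aestronglyMeasurable
    (ae_of_all _ fun _ => abs_comp_finset_filter_le φ s _)

end FinsetFilter

section Lovasz

variable {α : Type} [Fintype α]

theorem integrable_comp_finset_filter_abs_sub_le (φ : Finset α → ℝ) (hφ : φ ∅ = 0)
    (s : Finset α) (x : α → ℝ) (a : ℝ) :
    Integrable fun θ => φ (s.filter fun e => |θ - a| ≤ x e) := by
  obtain ⟨M, hM⟩ := Finite.exists_le x
  have hbounded : IntegrableOn (fun θ => φ (s.filter fun e => |θ - a| ≤ x e))
      (Set.Icc (a - M) (a + M)) :=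
    (integrableOn_const measure_Icc_lt_top.ne (C := ∑ A ∈ s.powerset, |φ A|)).mono'
      (measurable_comp_finset_filter φ s _ fun e => measurableSet_le
        (measurable_id.sub_const a).abs measurable_const).aestronglyMeasurable
      (ae_of_all _ fun _ => abs_comp_finset_filter_le φ s _)
  refine hbounded.integrable_of_forall_notMem_eq_zero fun θ hθ => ?_
  have hfar : ∀ e, ¬ |θ - a| ≤ x e := fun e he =>
    hθ (Set.mem_Icc.2 (by constructor <;> linarith [abs_le.1 (he.trans (hM e))]))
  simp [hfar, hφ]

theorem intervalIntegral_comp_finset_filter_abs_sub_le (φ : Finset α → ℝ) (hφ : φ ∅ = 0)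
    (s : Finset α) (hφs : ∀ A ⊆ s, 0 ≤ φ A) (x : α → ℝ) (a : ℝ) {b : ℝ} (hb : 0 ≤ b) :
    ∫ θ in (0:ℝ)..b, φ (s.filter fun e => |θ - a| ≤ x e) ≤ 2 * lovaszExt φ s x :=
  calc ∫ θ in (0:ℝ)..b, φ (s.filter fun e => |θ - a| ≤ x e)
      = ∫ θ in Set.Ioc 0 b, φ (s.filter fun e => |θ - a| ≤ x e) :=
        intervalIntegral.integral_of_le hb
    _ ≤ ∫ θ, φ (s.filter fun e => |θ - a| ≤ x e) :=
        setIntegral_le_integral (integrable_comp_finset_filter_abs_sub_le φ hφ s x a)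
          (ae_of_all _ fun _ => hφs _ (filter_subset _ _))
    _ = ∫ θ, φ (s.filter fun e => |θ| ≤ x e) :=
        integral_sub_right_eq_self (fun θ => φ (s.filter fun e => |θ| ≤ x e)) a
    _ = 2 * lovaszExt φ s x := integral_comp_abs (f := fun t => φ (s.filter fun e => t ≤ x e))

end Lovasz

theorem abs_sub_le_or_abs_sub_le_of_mem_uIcc {a b θ c₁ c₂ : ℝ} (hab : |a - b| ≤ c₁ + c₂)
    (hθ : θ ∈ Set.uIcc a b) : |θ - a| ≤ c₁ ∨ |θ - b| ≤ c₂ := by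
  rw [Set.mem_uIcc] at hθ
  by_contra! h
  rw [abs_le] at hab
  rcases hθ with hθ | hθ <;>
    [rw [abs_of_nonneg (sub_nonneg.2 hθ.1), abs_of_nonpos (sub_nonpos.2 hθ.2)] at h;
     rw [abs_of_nonpos (sub_nonpos.2 hθ.2), abs_of_nonneg (sub_nonneg.2 hθ.1)] at h] <;>
    linarith

theorem udist_le_ofReal {V E : Type} [DecidableEq V] (ep1 ep2 : E → V) (len : E → ℝ) (e : E) :
    udist ep1 ep2 len (ep1 e) (ep2 e) ≤ ENNReal.ofReal (len e) := by
  have hwalk : UWalk ep1 ep2 (ep1 e) (ep2 e) [e] := by simp [UWalk]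
  exact (iInf_le _ ⟨[e], hwalk⟩).trans_eq (by simp)

theorem abs_sub_le_of_ofReal_le_udist {V E : Type} [DecidableEq V] {ep1 ep2 : E → V}
    {len : E → ℝ} {g : V → ℝ} (hLip : ∀ u v, ENNReal.ofReal |g u - g v| ≤ udist ep1 ep2 len u v)
    {e : E} (he : 0 ≤ len e) : |g (ep1 e) - g (ep2 e)| ≤ len e :=
  (ENNReal.ofReal_le_ofReal_iff he).1 ((hLip _ _).trans (udist_le_ofReal ep1 ep2 len e))

namespace UPolyNet

variable {V E : Type} [Fintype V] [Fintype E] [DecidableEq V] [DecidableEq E]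
  (N : UPolyNet V E)

theorem cutCost_nonneg (F : Finset E) : 0 ≤ N.cutCost F :=
  Real.sInf_nonneg <| by
    rintro _ ⟨g, -, rfl⟩
    exact sum_nonneg fun v _ => N.rho_nonneg v _ ((filter_subset _ _).trans inter_subset_left)

theorem cutCost_le {F : Finset E} (g : E → V) (hg : ∀ e ∈ F, g e = N.ep1 e ∨ g e = N.ep2 e) :
    N.cutCost F ≤ ∑ v, N.rho v ((N.incE v ∩ F).filter fun e => g e = v) := by
  refine csInf_le ⟨0, ?_⟩ ⟨g, hg, rfl⟩
  rintro _ ⟨g, -, rfl⟩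
  exact sum_nonneg fun v _ => N.rho_nonneg v _ ((filter_subset _ _).trans inter_subset_left)

theorem nodeVol_nonneg (c1 c2 : E → ℝ) (v : V) : 0 ≤ N.nodeVol c1 c2 v :=
  setIntegral_nonneg measurableSet_Ioi fun _ _ => N.rho_nonneg v _ (filter_subset _ _)

theorem cutCost_uvcut_sublevel_le (c1 c2 : E → ℝ) (g : V → ℝ)
    (hedge : ∀ e, |g (N.ep1 e) - g (N.ep2 e)| ≤ c1 e + c2 e) (θ : ℝ) :
    N.cutCost (uvcut N.ep1 N.ep2 (univ.filter fun u => g u ≤ θ)) ≤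
      ∑ v, N.rho v ((N.incE v).filter fun e => |θ - g v| ≤ N.dvec c1 c2 v e) := by
  set assign : E → V := fun e => if |θ - g (N.ep1 e)| ≤ c1 e then N.ep1 e else N.ep2 e
  refine (N.cutCost_le assign fun e _ => by unfold assign; split_ifs <;> simp).trans
    (sum_le_sum fun v _ => N.rho_mono v _ _ ?_ (filter_subset _ _))
  intro e he
  simp only [mem_filter, mem_inter] at he ⊢
  obtain ⟨⟨heI, heF⟩, rfl⟩ := he
  refine ⟨heI, ?_⟩
  have hcross : g (N.ep1 e) ≤ θ ∧ θ < g (N.ep2 e) ∨ θ < g (N.ep1 e) ∧ g (N.ep2 e) ≤ θ := by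
    simpa [uvcut] using heF
  have hθ : θ ∈ Set.uIcc (g (N.ep1 e)) (g (N.ep2 e)) := by
    rw [Set.mem_uIcc]; rcases hcross with h | h
    exacts [Or.inl ⟨h.1, h.2.le⟩, Or.inr ⟨h.2, h.1.le⟩]
  by_cases h1 : |θ - g (N.ep1 e)| ≤ c1 e
  · simp [assign, h1, dvec]
  · have hloop : N.ep1 e ≠ N.ep2 e := by
      intro h; rw [h] at hcross; rcases hcross with h | h <;> linarith [h.1, h.2]
    have h2 : |θ - g (N.ep2 e)| ≤ c2 e :=
      (abs_sub_le_or_abs_sub_le_of_mem_uIcc (hedge e) hθ).resolve_left h1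
    simpa [assign, h1, dvec, hloop] using h2

end UPolyNet

theorem line_embedding_cut_cost_bound_general {V E : Type} [Fintype V] [Fintype E]
    [DecidableEq V] [DecidableEq E] (N : UPolyNet V E)
    (ℓ c1 c2 : E → ℝ) (hc1 : ∀ e, 0 ≤ c1 e) (hc2 : ∀ e, 0 ≤ c2 e)
    (hsum : ∀ e, c1 e + c2 e = ℓ e)
    (β : ℝ) (g : V → ℝ)
    (hLip : ∀ u v : V, ENNReal.ofReal |g u - g v| ≤ udist N.ep1 N.ep2 ℓ u v) :
    (∫ θ in (0:ℝ)..β,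
        N.cutCost (uvcut N.ep1 N.ep2 (Finset.univ.filter (fun u => g u ≤ θ)))) ≤
      2 * ∑ u : V, N.nodeVol c1 c2 u := by
  rcases lt_or_ge β 0 with hβ | hβ
  · rw [intervalIntegral.integral_symm]
    exact (neg_nonpos.2 (intervalIntegral.integral_nonneg hβ.le fun _ _ =>
      N.cutCost_nonneg _)).trans
      (mul_nonneg zero_le_two (sum_nonneg fun v _ => N.nodeVol_nonneg c1 c2 v))
  have hedge (e : E) : |g (N.ep1 e) - g (N.ep2 e)| ≤ c1 e + c2 e :=
    hsum e ▸ abs_sub_le_of_ofReal_le_udist hLip (hsum e ▸ add_nonneg (hc1 e) (hc2 e))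
  have hnode (v : V) := intervalIntegrable_comp_finset_filter (N.rho v) (N.incE v)
    (fun θ e => |θ - g v| ≤ N.dvec c1 c2 v e)
    (fun e => measurableSet_le (measurable_id.sub_const _).abs measurable_const) 0 β
  calc _ ≤ ∫ θ in (0:ℝ)..β,
          ∑ v, N.rho v ((N.incE v).filter fun e => |θ - g v| ≤ N.dvec c1 c2 v e) :=
        intervalIntegral.integral_mono hβ
          (intervalIntegrable_comp_finset_filter (fun S => N.cutCost (uvcut N.ep1 N.ep2 S)) univ
            (fun θ u => g u ≤ θ) (fun _ => measurableSet_Ici) 0 β)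
          (by simpa only [Finset.sum_fn] using IntervalIntegrable.sum univ fun v _ => hnode v)
          (N.cutCost_uvcut_sublevel_le c1 c2 g hedge)
    _ = ∑ v, ∫ θ in (0:ℝ)..β,
          N.rho v ((N.incE v).filter fun e => |θ - g v| ≤ N.dvec c1 c2 v e) :=
        intervalIntegral.integral_finsetSum fun v _ => hnode v
    _ ≤ ∑ v, 2 * N.nodeVol c1 c2 v := sum_le_sum fun v _ =>
        intervalIntegral_comp_finset_filter_abs_sub_le (N.rho v) (N.rho_empty v) (N.incE v)
          (N.rho_nonneg v) _ _ hβ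
    _ = 2 * ∑ v, N.nodeVol c1 c2 v := (mul_sum _ _ _).symm

/-- Let `N` be an undirected polymatroidal network with a fractional
cut solution (`ℓ e = c1 e + c2 e`), and let `g : V → [0,β]` be 1-Lipschitz w.r.t.
`dist_ℓ`. With `S_θ = {u : g u ≤ θ}` one has
`∫_0^β ν(δ(S_θ)) dθ ≤ 2 · Σ_u ρ̂_u(d_u)`. -/
theorem line_embedding_cut_cost_bound {V E : Type} [Fintype V] [Fintype E]
    [DecidableEq V] [DecidableEq E] (N : UPolyNet V E)
    (ℓ c1 c2 : E → ℝ) (hc1 : ∀ e, 0 ≤ c1 e) (hc2 : ∀ e, 0 ≤ c2 e)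
    (hsum : ∀ e, c1 e + c2 e = ℓ e)
    (β : ℝ) (g : V → ℝ) (hg : ∀ u, g u ∈ Set.Icc (0:ℝ) β)
    (hLip : ∀ u v : V, ENNReal.ofReal |g u - g v| ≤ udist N.ep1 N.ep2 ℓ u v) :
    (∫ θ in (0:ℝ)..β,
        N.cutCost (uvcut N.ep1 N.ep2 (Finset.univ.filter (fun u => g u ≤ θ)))) ≤
      2 * ∑ u : V, N.nodeVol c1 c2 u :=
  line_embedding_cut_cost_bound_general N ℓ c1 c2 hc1 hc2 hsum β g hLip
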